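/- In the semigroup H, if X and Y are nonempty words in the letters a1, a2, a3, then L·X·Y = M·P·X·R·s1·Q·Y; moreover, if X or Y contains any letter outside {a1,a2,a3}, then L·X·Y = 0. -/

import Mathlib

inductive Phi
  | L | M | P | Q | R | g | s1 | s2 | t1 | t2 | t3 | a1 | a2 | a3
deriving DecidableEq

open Phi

abbrev W0 := WithZero (FreeMonoid Phi)

def w (l : List Phi) : W0 := ((FreeMonoid.ofList l : FreeMonoid Phi) : W0)

def ai : Fin 3 → Phi
  | 0 => a1 | 1 => a2 | 2 => a3

def ti : Fin 3 → Phi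
  | 0 => t1 | 1 => t2 | 2 => t3

def si : Fin 2 → Phi
  | 0 => s1 | 1 => s2

/-- `x` is one of the letters `a1, a2, a3`. -/
def isA (x : Phi) : Prop := x = a1 ∨ x = a2 ∨ x = a3

/-- The defining relations (1)–(14) of the semigroup `H`. -/
inductive rel : W0 → W0 → Prop
  | r1L (x : Phi) : rel (w [x, L]) 0
  | r1M (x : Phi) : rel (w [x, M]) 0
  | r2 : rel (w [L]) (w [M, P, g])
  | r3 (i : Fin 3) : rel (w [g, ai i]) (w [ai i, g])
  | r4 (x : Phi) (h : ¬ isA x) : rel (w [g, x]) 0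
  | r5 (i j : Fin 3) : rel (w [ai i, g, ai j]) (w [ai i, R, s1, Q, ai j])
  | r6 (i : Fin 3) (x : Phi) (h : x = R ∨ isA x) : rel (w [ti i, x]) (w [x, ti i])
  | r7 (i : Fin 3) : rel (w [P, ai i, ti i]) (w [ai i, P, s1])
  | r8 (i j : Fin 3) (h : i ≠ j) : rel (w [P, ai j, ti i]) (w [ai j, P, s2])
  | r9 (i : Fin 3) (j : Fin 2) : rel (w [si j, ai i]) (w [ai i, si j])
  | r10 : rel (w [s1, R]) (w [R, s1])
  | r11 (i : Fin 3) : rel (w [s1, Q, ai i]) (w [ti i, ai i, Q])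
  | r12 : rel (w [P, R, s1]) 0
  | r13 (i : Fin 3) : rel (w [s2, R, ai i]) (w [ai i, s2, R])
  | r14 (i : Fin 3) : rel (w [s2, R, Q, ai i]) (w [R, ti i, ai i, Q])

/-- The congruence on the free monoid with zero generated by the relations. -/
def hCon : Con W0 := conGen rel

/-- The semigroup (with zero) `H` of the paper. -/
abbrev H := hCon.Quotient

/-- The quotient map. -/
def q : W0 →* H := hCon.mk'

/-- `l` is a word in the letters `a1, a2, a3`. -/
def Aword (l : List Phi) : Prop := ∀ x ∈ l, isA x

/-- `l` is square-free: it contains no factor `Y ++ Y` with `Y` nonempty. -/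
def SqFree (l : List Phi) : Prop := ∀ Y : List Phi, Y ≠ [] → ¬ (Y ++ Y) <:+: l

/-!
Relation (2) rewrites `L` as `M·P·g`. By (3) the letter `g` moves rightwards through any word
in `a1, a2, a3`, until it either meets a letter outside `{a1, a2, a3}`, which kills the word by (4),
or sits between the last letter `a_i` of `X` and the first letter `a_j` of `Y`, where (5) replaces
`a_i·g·a_j` by `a_i·R·s1·Q·a_j`.
-/

lemma w_append (l₁ l₂ : List Phi) : w (l₁ ++ l₂) = w l₁ * w l₂ := by
  simp [w]

lemma q_mul_mul_eq_of_rel {u v : W0} (h : rel u v) (c d : W0) :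
    q (c * u * d) = q (c * v * d) :=
  hCon.eq.mpr (hCon.mul (hCon.mul (hCon.refl c) (ConGen.Rel.of _ _ h)) (hCon.refl d))

lemma q_append_eq_of_rel (c d : List Phi) {u v : List Phi} (h : rel (w u) (w v)) :
    q (w (c ++ u ++ d)) = q (w (c ++ v ++ d)) := by
  simpa [w_append, mul_assoc] using q_mul_mul_eq_of_rel h (w c) (w d)

lemma q_append_eq_zero_of_rel (c d : List Phi) {u : List Phi} (h : rel (w u) 0) :
    q (w (c ++ u ++ d)) = q 0 := by
  simpa [w_append, mul_assoc] using q_mul_mul_eq_of_rel h (w c) (w d)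

lemma exists_ai_eq_of_isA {x : Phi} (h : isA x) : ∃ i, ai i = x := by
  rcases h with rfl | rfl | rfl
  exacts [⟨0, rfl⟩, ⟨1, rfl⟩, ⟨2, rfl⟩]

lemma aword_cons {x : Phi} {l : List Phi} : Aword (x :: l) ↔ isA x ∧ Aword l :=
  List.forall_mem_cons

lemma aword_append {l₁ l₂ : List Phi} : Aword (l₁ ++ l₂) ↔ Aword l₁ ∧ Aword l₂ :=
  List.forall_mem_append

lemma q_L_cons (l : List Phi) : q (w (L :: l)) = q (w (M :: P :: g :: l)) := by
  simpa using q_append_eq_of_rel [] l rel.r2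

lemma q_g_cons_of_isA (c d : List Phi) {x : Phi} (hx : isA x) :
    q (w (c ++ g :: x :: d)) = q (w (c ++ x :: g :: d)) := by
  obtain ⟨i, rfl⟩ := exists_ai_eq_of_isA hx
  simpa using q_append_eq_of_rel c d (rel.r3 i)

lemma q_g_append_of_aword (c d : List Phi) {A : List Phi} (hA : Aword A) :
    q (w (c ++ g :: (A ++ d))) = q (w (c ++ A ++ g :: d)) := by
  induction A generalizing c with
  | nil => simp
  | cons x A ih =>
    obtain ⟨hx, hA⟩ := aword_cons.mp hA
    rw [List.cons_append, q_g_cons_of_isA c _ hx]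
    simpa using ih (c ++ [x]) hA

lemma q_g_cons_eq_zero_of_not_aword (c : List Phi) {l : List Phi} (hl : ¬ Aword l) :
    q (w (c ++ g :: l)) = q 0 := by
  induction l generalizing c with
  | nil => exact absurd (fun _ h => absurd h List.not_mem_nil) hl
  | cons x l ih =>
    by_cases hx : isA x
    · rw [q_g_cons_of_isA c l hx]
      simpa using ih (c ++ [x]) (fun h => hl (aword_cons.mpr ⟨hx, h⟩))
    · simpa using q_append_eq_zero_of_rel c l (rel.r4 x hx)

/-- if `X, Y` are nonempty words in `a1,a2,a3` then
`L·X·Y = M·P·X·R·s1·Q·Y`; if `X` or `Y` contains another letter then `L·X·Y = 0`. -/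
theorem stmt2 (X Y : List Phi) (hX : X ≠ []) (hY : Y ≠ []) :
    (Aword X → Aword Y →
      q (w ([L] ++ X ++ Y)) = q (w ([M, P] ++ X ++ [R, s1, Q] ++ Y))) ∧
    ((¬ Aword X ∨ ¬ Aword Y) → q (w ([L] ++ X ++ Y)) = q 0) := by
  have hL : q (w ([L] ++ X ++ Y)) = q (w ([M, P] ++ g :: (X ++ Y))) := by
    simpa using q_L_cons (X ++ Y)
  refine ⟨fun hAX hAY => ?_, fun h => ?_⟩
  · obtain ⟨A, x, rfl⟩ := (List.eq_nil_or_concat' X).resolve_left hX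
    obtain ⟨y, B, rfl⟩ := List.exists_cons_of_ne_nil hY
    obtain ⟨i, rfl⟩ := exists_ai_eq_of_isA (hAX x (by simp))
    obtain ⟨j, rfl⟩ := exists_ai_eq_of_isA (hAY y List.mem_cons_self)
    calc q (w ([L] ++ (A ++ [ai i]) ++ ai j :: B))
        = q (w ([M, P] ++ (A ++ [ai i]) ++ g :: ai j :: B)) :=
          hL.trans (q_g_append_of_aword _ _ hAX)
      _ = q (w ([M, P] ++ A ++ [ai i, g, ai j] ++ B)) := by simp
      _ = q (w ([M, P] ++ A ++ [ai i, R, s1, Q, ai j] ++ B)) :=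
          q_append_eq_of_rel _ _ (rel.r5 i j)
      _ = q (w ([M, P] ++ (A ++ [ai i]) ++ [R, s1, Q] ++ ai j :: B)) := by simp
  · rw [hL]
    refine q_g_cons_eq_zero_of_not_aword _ fun hXY => ?_
    exact h.elim (· (aword_append.mp hXY).1) (· (aword_append.mp hXY).2)
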